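/- Let P (service providers) and T (time slots) be nonempty finite sets, n = |P|, ξ > 0, B > 0, and w : P × T → ℝ with w_{i,t} > 0 for all i, t. Define C* = (n/ξ)·ln( ( ∑_{t ∈ T} (∏_{j ∈ P} ξ·w_{j,t})^{1/n} ) / B ) and h*_{i,t} = C*/n + (1/ξ)·ln( w_{i,t} / (∏_{j ∈ P} w_{j,t})^{1/n} ). Assume C* ≥ 0 and h*_{i,t} ≥ 0 for all i ∈ P, t ∈ T. Then (C*, h*) is feasible and optimal: for every C ≥ 0 and every h : P × T → ℝ with h_{i,t} ≥ 0 for all i, t and ∑_{i ∈ P} h_{i,t} ≤ C for every t, one has ∑_{t ∈ T} ∑_{i ∈ P} w_{i,t}·(1 − exp(−ξ·h_{i,t})) − B·C ≤ ∑_{t ∈ T} ∑_{i ∈ P} w_{i,t}·(1 − exp(−ξ·h*_{i,t})) − B·C*. -/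

import Mathlib

/-!
The objective is a sum of concave functions `h ↦ w (1 - exp (-ξ h))`, so it lies below its
tangent at `h*`. At `h*` the marginal value `w i t ξ exp (-ξ h* i t)` equals
`λ t = ξ (∏ j, w j t)^(1/n) · B / S` with `S = ∑ t, ξ (∏ j, w j t)^(1/n)`:
it does not depend on the provider `i`, and the multipliers `λ t ≥ 0` add up to `B`.
Since moreover `∑ i, h* i t = C*`, summing the tangent bounds gives, for every feasible `(C, h)`,
`Δ objective ≤ ∑ t, λ t (∑ i, h i t - C*) ≤ B (C - C*)`.
-/

open Finset Real

theorem mul_one_sub_exp_sub_le_tangent {w : ℝ} (hw : 0 ≤ w) (ξ x y : ℝ) :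
    w * (1 - exp (-ξ * y)) - w * (1 - exp (-ξ * x)) ≤
      w * ξ * exp (-ξ * x) * (y - x) := by
  have htangent : exp (-ξ * x) * (ξ * (x - y) + 1) ≤ exp (-ξ * y) := by
    calc exp (-ξ * x) * (ξ * (x - y) + 1)
        ≤ exp (-ξ * x) * exp (ξ * (x - y)) := by gcongr; exact add_one_le_exp _
      _ = exp (-ξ * y) := by rw [← exp_add]; ring_nf
  nlinarith

theorem sum_sub_mul_le_of_le_tangent {P T : Type*} [Fintype P] [Fintype T]
    (u : P → T → ℝ → ℝ) (x h : P → T → ℝ) (μ : T → ℝ) (B C Cstar : ℝ)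
    (hμ : ∀ t, 0 ≤ μ t) (hμsum : ∑ t, μ t = B) (hx : ∀ t, ∑ i, x i t = Cstar)
    (hu : ∀ i t y, u i t y - u i t (x i t) ≤ μ t * (y - x i t))
    (hh : ∀ t, ∑ i, h i t ≤ C) :
    ∑ t, ∑ i, u i t (h i t) - B * C ≤ ∑ t, ∑ i, u i t (x i t) - B * Cstar := by
  have hslot : ∀ t, ∑ i, u i t (h i t) - ∑ i, u i t (x i t) ≤ μ t * (C - Cstar) := fun t =>
    calc ∑ i, u i t (h i t) - ∑ i, u i t (x i t)
        ≤ ∑ i, μ t * (h i t - x i t) := by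
          rw [← sum_sub_distrib]; exact sum_le_sum fun i _ => hu i t _
      _ = μ t * (∑ i, h i t - Cstar) := by rw [← mul_sum, sum_sub_distrib, hx]
      _ ≤ μ t * (C - Cstar) := by gcongr; exacts [hμ t, hh t]
  have htotal := sum_le_sum fun t (_ : t ∈ univ) => hslot t
  rw [sum_sub_distrib, ← sum_mul, hμsum] at htotal
  linarith

theorem prod_const_mul_rpow_inv_card {ι : Type*} [Fintype ι] [Nonempty ι]
    {c : ℝ} (hc : 0 ≤ c) {w : ι → ℝ} (hw : ∀ i, 0 ≤ w i) :
    (∏ j, c * w j) ^ (1 / (Fintype.card ι : ℝ)) =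
      c * (∏ j, w j) ^ (1 / (Fintype.card ι : ℝ)) := by
  have hcard : (Fintype.card ι : ℝ) ≠ 0 := by positivity
  rw [prod_mul_distrib, prod_const, mul_rpow (by positivity) (prod_nonneg fun j _ => hw j),
    card_univ, ← rpow_natCast, ← rpow_mul hc, mul_one_div_cancel hcard, rpow_one]

theorem sum_log_div_rpow_inv_card_prod {ι : Type*} [Fintype ι] [Nonempty ι]
    {w : ι → ℝ} (hw : ∀ i, 0 < w i) :
    ∑ i, log (w i / (∏ j, w j) ^ (1 / (Fintype.card ι : ℝ))) = 0 := by
  have hprod : 0 < ∏ j, w j := prod_pos fun j _ => hw j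
  have hcard : (Fintype.card ι : ℝ) ≠ 0 := by positivity
  simp only [log_div (hw _).ne' (rpow_pos_of_pos hprod _).ne', log_rpow hprod,
    sum_sub_distrib, sum_const, card_univ, nsmul_eq_mul, log_prod fun j _ => (hw j).ne']
  field_simp
  ring

theorem mul_exp_neg_mul_add_log_div {a g : ℝ} (ha : 0 < a) (hg : 0 < g) {ξ : ℝ}
    (hξ : ξ ≠ 0) (c : ℝ) :
    a * exp (-ξ * (c + 1 / ξ * log (a / g))) = exp (-ξ * c) * g := by
  rw [show -ξ * (c + 1 / ξ * log (a / g)) = -ξ * c - log (a / g) by field_simp; ring,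
    exp_sub, exp_log (div_pos ha hg)]
  field_simp

theorem stmt13_general {P T : Type*} [Fintype P] [Fintype T] [Nonempty P] [Nonempty T]
    (ξ B : ℝ) (hξ : 0 < ξ) (hB : 0 < B)
    (w : P → T → ℝ) (hw : ∀ i t, 0 < w i t)
    (n : ℝ) (hn : n = (Fintype.card P : ℝ))
    (Cstar : ℝ)
    (hCdef : Cstar = (n / ξ) *
      Real.log ((∑ t : T, (∏ j : P, ξ * w j t) ^ (1 / n)) / B))
    (hstar : P → T → ℝ)
    (hhdef : ∀ (i : P) (t : T), hstar i t = Cstar / n +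
      (1 / ξ) * Real.log (w i t / (∏ j : P, w j t) ^ (1 / n))) :
    (∀ t : T, (∑ i : P, hstar i t) ≤ Cstar) ∧
    ∀ (C : ℝ) (h : P → T → ℝ), 0 ≤ C → (∀ (i : P) (t : T), 0 ≤ h i t) →
      (∀ t : T, (∑ i : P, h i t) ≤ C) →
      (∑ t : T, ∑ i : P, w i t * (1 - Real.exp (-ξ * h i t))) - B * C ≤
        (∑ t : T, ∑ i : P, w i t * (1 - Real.exp (-ξ * hstar i t))) - B * Cstar := by
  subst hn
  rw [sum_congr rfl fun t _ => prod_const_mul_rpow_inv_card hξ.le fun j => (hw j t).le] at hCdef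
  set g : T → ℝ := fun t => (∏ j, w j t) ^ (1 / (Fintype.card P : ℝ))
  have hg : ∀ t, 0 < g t := fun t => rpow_pos_of_pos (prod_pos fun j _ => hw j t) _
  set S := ∑ t, ξ * g t
  have hS : 0 < S := sum_pos (fun t _ => mul_pos hξ (hg t)) univ_nonempty
  have hsum : ∀ t, ∑ i, hstar i t = Cstar := fun t => by
    simp only [hhdef, sum_add_distrib, ← mul_sum, sum_log_div_rpow_inv_card_prod (hw · t)]
    simp [field]
  have hslope : ∀ i t, w i t * ξ * exp (-ξ * hstar i t) = ξ * g t * (B / S) := fun i t => by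
    have hexp : exp (-ξ * (Cstar / Fintype.card P)) = B / S := by
      have hexponent : -ξ * (Cstar / Fintype.card P) = -log (S / B) := by
        rw [hCdef]; field_simp
      rw [hexponent, exp_neg, exp_log (div_pos hS hB), inv_div]
    rw [hhdef, mul_right_comm, mul_exp_neg_mul_add_log_div (hw i t) (hg t) hξ.ne', hexp]
    ring
  refine ⟨fun t => (hsum t).le, fun C h _ _ hh => ?_⟩
  refine sum_sub_mul_le_of_le_tangent (fun i t y => w i t * (1 - exp (-ξ * y))) hstar h
    (fun t => ξ * g t * (B / S)) B C Cstar
    (fun t => (mul_pos (mul_pos hξ (hg t)) (div_pos hB hS)).le) ?_ hsum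
    (fun i t y => hslope i t ▸ mul_one_sub_exp_sub_le_tangent (hw i t).le ξ _ y) hh
  rw [← sum_mul, mul_div_cancel₀ B hS.ne']

/-- Let `P`, `T` be nonempty finite sets, `n = |P|`, `ξ > 0`, `B > 0`,
and `w i t > 0` for all `i, t`. With
`C* = (n/ξ)·ln((∑ t, (∏ j, ξ·w j t)^(1/n)) / B)` and
`h* i t = C*/n + (1/ξ)·ln(w i t / (∏ j, w j t)^(1/n))`, assuming `C* ≥ 0` and
`h* i t ≥ 0` for all `i, t`, the pair `(C*, h*)` is feasible and optimal for the
problem of maximizing `∑ t, ∑ i, w i t·(1 − exp(−ξ·h i t)) − B·C` over all `C ≥ 0`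
and `h ≥ 0` with `∑ i, h i t ≤ C` for every `t`. -/
theorem stmt13 {P T : Type*} [Fintype P] [Fintype T] [Nonempty P] [Nonempty T]
    (ξ B : ℝ) (hξ : 0 < ξ) (hB : 0 < B)
    (w : P → T → ℝ) (hw : ∀ i t, 0 < w i t)
    (n : ℝ) (hn : n = (Fintype.card P : ℝ))
    (Cstar : ℝ)
    (hCdef : Cstar = (n / ξ) *
      Real.log ((∑ t : T, (∏ j : P, ξ * w j t) ^ (1 / n)) / B))
    (hstar : P → T → ℝ)
    (hhdef : ∀ (i : P) (t : T), hstar i t = Cstar / n +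
      (1 / ξ) * Real.log (w i t / (∏ j : P, w j t) ^ (1 / n)))
    (hCnonneg : 0 ≤ Cstar) (hhnonneg : ∀ (i : P) (t : T), 0 ≤ hstar i t) :
    (∀ t : T, (∑ i : P, hstar i t) ≤ Cstar) ∧
    ∀ (C : ℝ) (h : P → T → ℝ), 0 ≤ C → (∀ (i : P) (t : T), 0 ≤ h i t) →
      (∀ t : T, (∑ i : P, h i t) ≤ C) →
      (∑ t : T, ∑ i : P, w i t * (1 - Real.exp (-ξ * h i t))) - B * C ≤
        (∑ t : T, ∑ i : P, w i t * (1 - Real.exp (-ξ * hstar i t))) - B * Cstar :=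
  stmt13_general ξ B hξ hB w hw n hn Cstar hCdef hstar hhdef
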